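/- arXiv:1208.2425 — 4 statements merged into one kernel-verified Lean document; each statement's English description precedes it below -/
import Mathlib

section
/- Let H be a complex Hilbert space and A a bounded self-adjoint operator on H whose spectrum is contained in [λ₀, ∞) for some λ₀ > 0. Fix T > 0 and set R_T = ∫₀^T e^{-2tA} dt, a bounded self-adjoint operator on H. Then R_T is invertible, and for every x ∈ H one has ⟨R_T⁻¹ x, x⟩ ≤ 2 ‖A^{1/2} x‖² / (1 − e^{-2Tλ₀}); equivalently, ‖R_T^{-1/2} x‖² ≤ 2 ‖A^{1/2} x‖² / (1 − e^{-2Tλ₀}). -/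
/-!
Spectrally, `R_T = g(A)` with `g(μ) = ∫₀^T e^{-2tμ} dt = (1 - e^{-2Tμ}) / (2μ)`, which is
positive on `spectrum A ⊆ [λ₀, ∞)`, so `R_T` is invertible with `R_T⁻¹ = g(A)⁻¹`. For `μ ≥ λ₀`,
`1 / g(μ) = 2μ / (1 - e^{-2Tμ}) ≤ 2μ / (1 - e^{-2Tλ₀})`, so by monotonicity of the functional
calculus `R_T⁻¹ ≤ 2A / (1 - e^{-2Tλ₀})` as operators, and `⟨A x, x⟩ = ‖A^{1/2} x‖²`,
`⟨R_T⁻¹ x, x⟩ = ‖R_T^{-1/2} x‖²`.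
-/

open MeasureTheory

/-- Fractional power `A^s` of a (positive self-adjoint) bounded operator, via the
continuous functional calculus. -/
noncomputable def fracPow {H : Type*} [NormedAddCommGroup H] [InnerProductSpace ℂ H]
    [CompleteSpace H] (A : H →L[ℂ] H) (s : ℝ) : H →L[ℂ] H :=
  cfc (fun x : ℝ => x ^ s) A

open scoped InnerProductSpace

noncomputable def gramianSymbol (T μ : ℝ) : ℝ := (1 - Real.exp (-(2 * T * μ))) / (2 * μ)

lemma integral_exp_eq_gramianSymbol (T : ℝ) {μ : ℝ} (hμ : μ ≠ 0) :
    ∫ t in (0:ℝ)..T, Real.exp (-(2 * t) * μ) = gramianSymbol T μ := by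
  have hc : -(2 * μ) ≠ 0 := by simpa using hμ
  calc ∫ t in (0:ℝ)..T, Real.exp (-(2 * t) * μ)
      = ∫ t in (0:ℝ)..T, Real.exp (-(2 * μ) * t) := by congr 1; ext t; ring_nf
    _ = gramianSymbol T μ := by
      rw [intervalIntegral.integral_comp_mul_left Real.exp hc, mul_zero, integral_exp,
        Real.exp_zero, gramianSymbol, smul_eq_mul]
      field_simp
      ring_nf

lemma continuousOn_gramianSymbol (T : ℝ) : ContinuousOn (gramianSymbol T) {μ | μ ≠ 0} :=
  ContinuousOn.div (by fun_prop) (by fun_prop) fun _ hμ => mul_ne_zero two_ne_zero hμ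

lemma gramianSymbol_pos {T μ : ℝ} (hT : 0 < T) (hμ : 0 < μ) : 0 < gramianSymbol T μ := by
  have : Real.exp (-(2 * T * μ)) < 1 := Real.exp_lt_one_iff.mpr (by nlinarith)
  exact div_pos (by linarith) (by linarith)

lemma inv_gramianSymbol_le {T lam μ : ℝ} (hT : 0 < T) (hlam : 0 < lam) (hμ : lam ≤ μ) :
    (gramianSymbol T μ)⁻¹ ≤ 2 / (1 - Real.exp (-(2 * T * lam))) * μ := by
  have hexp : Real.exp (-(2 * T * μ)) ≤ Real.exp (-(2 * T * lam)) :=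
    Real.exp_le_exp.mpr (by nlinarith)
  have hlt : Real.exp (-(2 * T * lam)) < 1 := Real.exp_lt_one_iff.mpr (by nlinarith)
  rw [gramianSymbol, inv_div, div_mul_eq_mul_div, mul_comm 2 μ]
  exact div_le_div_of_nonneg_left (by linarith) (by linarith) (by linarith)

section FunctionalCalculus

variable {𝒜 : Type*} [NormedRing 𝒜] [StarRing 𝒜] [NormedAlgebra ℝ 𝒜] [StarModule ℝ 𝒜]
  [ContinuousFunctionalCalculus ℝ 𝒜 IsSelfAdjoint] {a : 𝒜}

lemma IsSelfAdjoint.exp_smul_eq_cfc (ha : IsSelfAdjoint a) (s : ℝ) :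
    NormedSpace.exp (s • a) = cfc (fun μ => Real.exp (s * μ)) a := by
  rw [← CFC.real_exp_eq_normedSpace_exp (.smul (star_trivial s) ha),
    ← cfc_comp_const_mul s Real.exp a]

lemma IsSelfAdjoint.integral_exp_smul_eq_cfc_gramianSymbol [CompleteSpace 𝒜]
    (ha : IsSelfAdjoint a) (hpos : ∀ μ ∈ spectrum ℝ a, 0 < μ) {T : ℝ} (hT : 0 ≤ T) :
    ∫ t in (0:ℝ)..T, NormedSpace.exp ((-(2 * t)) • a) = cfc (gramianSymbol T) a := by
  have hcfc : cfc (fun μ => ∫ t in Set.Ioc 0 T, Real.exp (-(2 * t) * μ)) a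
      = ∫ t in Set.Ioc 0 T, cfc (fun μ => Real.exp (-(2 * t) * μ)) a :=
    cfc_setIntegral measurableSet_Ioc _ (fun _ => 1) a (by fun_prop)
      (ae_restrict_of_forall_mem measurableSet_Ioc fun t ht μ hμ => by
        rw [Real.norm_eq_abs, Real.abs_exp, Real.exp_le_one_iff]
        nlinarith [ht.1, hpos μ hμ])
      (hasFiniteIntegral_const 1)
  simp only [intervalIntegral.integral_of_le hT, ha.exp_smul_eq_cfc]
  rw [← hcfc]
  refine cfc_congr fun μ hμ => ?_
  rw [← intervalIntegral.integral_of_le hT, integral_exp_eq_gramianSymbol T (hpos μ hμ).ne']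

end FunctionalCalculus

section HilbertSpace

variable {H : Type*} [NormedAddCommGroup H] [InnerProductSpace ℂ H] [CompleteSpace H]
  {A : H →L[ℂ] H}

lemma re_inner_cfc_apply_le_of_le {f g : ℝ → ℝ} (hf : ContinuousOn f (spectrum ℝ A))
    (hg : ContinuousOn g (spectrum ℝ A)) (hfg : ∀ μ ∈ spectrum ℝ A, f μ ≤ g μ) (x : H) :
    (⟪cfc f A x, x⟫_ℂ).re ≤ (⟪cfc g A x, x⟫_ℂ).re := by
  have h := ((ContinuousLinearMap.le_def _ _).mp (cfc_mono hfg)).re_inner_nonneg_left x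
  simpa [inner_sub_left] using h

lemma norm_cfc_apply_sq (hA : IsSelfAdjoint A) {f : ℝ → ℝ}
    (hf : ContinuousOn f (spectrum ℝ A)) (x : H) :
    ‖cfc f A x‖ ^ 2 = (⟪cfc (fun μ => f μ ^ 2) A x, x⟫_ℂ).re := by
  have hadj : ContinuousLinearMap.adjoint (cfc f A) = cfc f A :=
    ContinuousLinearMap.isSelfAdjoint_iff'.mp (cfc_predicate f A)
  rw [ContinuousLinearMap.apply_norm_sq_eq_inner_adjoint_left, hadj, cfc_pow f 2 A, pow_two]
  rfl

lemma fracPow_one (hA : IsSelfAdjoint A) : fracPow A 1 = A := by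
  simp only [fracPow, Real.rpow_one]
  exact cfc_id' ℝ A

lemma fracPow_neg_one (hA : IsSelfAdjoint A) (hunit : IsUnit A) :
    fracPow A (-1) = Ring.inverse A := by
  simp only [fracPow, Real.rpow_neg_one]
  exact cfc_ringInverse_id A hunit

lemma norm_fracPow_apply_sq (hA : IsSelfAdjoint A) (hpos : ∀ μ ∈ spectrum ℝ A, 0 < μ)
    (s : ℝ) (x : H) : ‖fracPow A s x‖ ^ 2 = (⟪fracPow A (2 * s) x, x⟫_ℂ).re := by
  have hcont : ContinuousOn (fun μ : ℝ => μ ^ s) (spectrum ℝ A) := fun μ hμ =>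
    (Real.continuousAt_rpow_const μ s (Or.inl (hpos μ hμ).ne')).continuousWithinAt
  rw [fracPow, norm_cfc_apply_sq hA hcont, fracPow]
  congr 3
  refine cfc_congr fun μ hμ => ?_
  rw [← Real.rpow_natCast, ← Real.rpow_mul (hpos μ hμ).le]
  ring_nf

lemma re_inner_inverse_cfc_gramianSymbol_le (hA : IsSelfAdjoint A) {lam T : ℝ} (hlam : 0 < lam)
    (hspec : ∀ μ ∈ spectrum ℝ A, lam ≤ μ) (hT : 0 < T) (x : H) :
    (⟪Ring.inverse (cfc (gramianSymbol T) A) x, x⟫_ℂ).re ≤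
      2 * ‖fracPow A (1/2) x‖ ^ 2 / (1 - Real.exp (-(2 * T * lam))) := by
  set c := 2 / (1 - Real.exp (-(2 * T * lam)))
  have hpos : ∀ μ ∈ spectrum ℝ A, 0 < μ := fun μ hμ => hlam.trans_le (hspec μ hμ)
  have hcont : ContinuousOn (gramianSymbol T) (spectrum ℝ A) :=
    (continuousOn_gramianSymbol T).mono fun μ hμ => (hpos μ hμ).ne'
  calc (⟪Ring.inverse (cfc (gramianSymbol T) A) x, x⟫_ℂ).re
      = (⟪cfc (fun μ => (gramianSymbol T μ)⁻¹) A x, x⟫_ℂ).re := by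
        rw [cfc_inv _ _ fun μ hμ => (gramianSymbol_pos hT (hpos μ hμ)).ne']
    _ ≤ (⟪cfc (c * ·) A x, x⟫_ℂ).re :=
        re_inner_cfc_apply_le_of_le (hcont.inv₀ fun μ hμ => (gramianSymbol_pos hT (hpos μ hμ)).ne')
          (by fun_prop) (fun μ hμ => inv_gramianSymbol_le hT hlam (hspec μ hμ)) x
    _ = c * (⟪A x, x⟫_ℂ).re := by
        rw [cfc_const_mul_id c A, smul_apply,
          RCLike.real_smul_eq_coe_smul (K := ℂ), inner_smul_left]
        simp
    _ = 2 * ‖fracPow A (1/2) x‖ ^ 2 / (1 - Real.exp (-(2 * T * lam))) := by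
        rw [norm_fracPow_apply_sq hA hpos, mul_one_div_cancel two_ne_zero, fracPow_one hA]
        ring

end HilbertSpace

/-- With `A` self-adjoint, spectrum in `[λ₀, ∞)`, `λ₀ > 0`, `T > 0` and
`R_T = ∫₀^T e^{-2tA} dt`, the operator `R_T` is invertible and for all `x`,
`⟨R_T⁻¹ x, x⟩ ≤ 2‖A^{1/2}x‖²/(1 - e^{-2Tλ₀})`, equivalently
`‖R_T^{-1/2} x‖² ≤ 2‖A^{1/2}x‖²/(1 - e^{-2Tλ₀})`. -/
theorem stmt2
    {H : Type*} [NormedAddCommGroup H] [InnerProductSpace ℂ H] [CompleteSpace H]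
    (A : H →L[ℂ] H) (hA : IsSelfAdjoint A)
    (lam : ℝ) (hlam : 0 < lam) (hspec : ∀ z ∈ spectrum ℂ A, lam ≤ z.re)
    (T : ℝ) (hT : 0 < T) (R : H →L[ℂ] H)
    (hR : R = ∫ t in (0:ℝ)..T, NormedSpace.exp ((-(2 * t)) • A)) :
    IsUnit R ∧
    ∀ x : H,
      ((inner ℂ ((Ring.inverse R) x) x : ℂ).re ≤
        2 * ‖fracPow A (1/2) x‖ ^ 2 / (1 - Real.exp (-(2 * T * lam)))) ∧
      (‖fracPow R (-(1/2)) x‖ ^ 2 ≤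
        2 * ‖fracPow A (1/2) x‖ ^ 2 / (1 - Real.exp (-(2 * T * lam)))) := by
  have hspecR : ∀ μ ∈ spectrum ℝ A, lam ≤ μ := by
    intro μ hμ
    rw [← hA.spectrumRestricts.image] at hμ
    obtain ⟨z, hz, rfl⟩ := hμ
    exact hspec z hz
  have hpos : ∀ μ ∈ spectrum ℝ A, 0 < μ := fun μ hμ => hlam.trans_le (hspecR μ hμ)
  have hcont : ContinuousOn (gramianSymbol T) (spectrum ℝ A) :=
    (continuousOn_gramianSymbol T).mono fun μ hμ => (hpos μ hμ).ne'
  rw [hA.integral_exp_smul_eq_cfc_gramianSymbol hpos hT.le] at hR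
  subst hR
  have hRpos : ∀ ν ∈ spectrum ℝ (cfc (gramianSymbol T) A), 0 < ν := by
    rw [cfc_map_spectrum _ _]
    rintro _ ⟨μ, hμ, rfl⟩
    exact gramianSymbol_pos hT (hpos μ hμ)
  have hunit : IsUnit (cfc (gramianSymbol T) A) :=
    (isUnit_cfc_iff _ _).mpr fun μ hμ => (gramianSymbol_pos hT (hpos μ hμ)).ne'
  have hbound := re_inner_inverse_cfc_gramianSymbol_le hA hlam hspecR hT
  refine ⟨hunit, fun x => ⟨hbound x, ?_⟩⟩
  rw [norm_fracPow_apply_sq (cfc_predicate _ _) hRpos, show 2 * -(1/2 : ℝ) = -1 by norm_num,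
    fracPow_neg_one (cfc_predicate _ _) hunit]
  exact hbound x
end

section
/- Let H be a complex Hilbert space and A a bounded linear operator on H. Let 0 < τ < T, let η : [−τ, 0] → H be continuously differentiable, and let φ : [0, T−τ] → H be continuous with ∫₀^{T−τ} e^{-(T−τ−s)A} φ(s) ds = η(−τ). Define ψ(t) = η′(t−T) + A η(t−T) for t ∈ [T−τ, T], and define Γ(t) = ∫₀^t e^{-(t−s)A} ( φ(s) 1_{[0, T−τ)}(s) + ψ(s) 1_{[T−τ, T]}(s) ) ds for t ∈ [0,T]. Then Γ(t) = η(t−T) for every t ∈ [T−τ, T]; in particular Γ(T) = η(0). -/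
/-!
Write `a = T - τ` and `E u = e^{uA}`, so that the integrand of `Γ t` is `E (s - t) (⋯)`.
For `t ≥ a` the integral splits at `a`. By the group law `E (s - t) = E (a - t) E (s - a)`, the
piece over `[0, a]` is `E (a - t) η(-τ)`. On `[a, t]` the integrand is the derivative of
`s ↦ E (s - t) η(s - T)`, because `d/ds E (s - t) = E (s - t) A` and `ψ = η' + A η`. So that piece
is `η(t - T) - E (a - t) η(a - T)`, and since `a - T = -τ` the two pieces add up to `η(t - T)`.
-/

open MeasureTheory Set

theorem HasDerivWithinAt.clm_apply_restrictScalars {𝕜 E F : Type*} [NontriviallyNormedField 𝕜]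
    [NormedAlgebra ℝ 𝕜] [NormedAddCommGroup E] [NormedSpace 𝕜 E] [NormedSpace ℝ E]
    [IsScalarTower ℝ 𝕜 E] [NormedAddCommGroup F] [NormedSpace 𝕜 F] [NormedSpace ℝ F]
    [IsScalarTower ℝ 𝕜 F] {c : ℝ → E →L[𝕜] F} {c' : E →L[𝕜] F} {u : ℝ → E} {u' : E}
    {s : Set ℝ} {x : ℝ} (hc : HasDerivWithinAt c c' s x) (hu : HasDerivWithinAt u u' s x) :
    HasDerivWithinAt (fun y => c y (u y)) (c' (u x) + c x u') s x := by
  have hc' := (ContinuousLinearMap.restrictScalarsIsometry 𝕜 E F ℝ ℝ).toContinuousLinearMap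
    |>.hasFDerivAt.comp_hasDerivWithinAt x hc
  simpa using hc'.clm_apply hu

theorem NormedSpace.exp_add_smul {𝔸 : Type*} [NormedRing 𝔸] [NormedAlgebra ℝ 𝔸]
    [CompleteSpace 𝔸] (a : 𝔸) (u v : ℝ) :
    NormedSpace.exp ((u + v) • a) = NormedSpace.exp (u • a) * NormedSpace.exp (v • a) := by
  rw [add_smul]
  exact NormedSpace.exp_add_of_commute_of_mem_ball (𝕂 := ℝ)
    (((Commute.refl a).smul_left u).smul_right v)
    (by simp [NormedSpace.expSeries_radius_eq_top]) (by simp [NormedSpace.expSeries_radius_eq_top])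

section ExpSmul

variable {H : Type*} [NormedAddCommGroup H] [NormedSpace ℂ H] [CompleteSpace H]
  (A : H →L[ℂ] H)

theorem ContinuousOn.exp_smul_sub_apply {f : ℝ → H} {S : Set ℝ} (hf : ContinuousOn f S)
    (c : ℝ) : ContinuousOn (fun s => NormedSpace.exp ((s - c) • A) (f s)) S :=
  ((differentiable_exp_smul_const ℝ A).continuous.comp
    (continuous_sub_right c)).continuousOn.clm_apply hf

theorem HasDerivWithinAt.exp_smul_sub_apply {f : ℝ → H} {f' : H} {S : Set ℝ} {x : ℝ}
    (hf : HasDerivWithinAt f f' S x) (c : ℝ) :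
    HasDerivWithinAt (fun s => NormedSpace.exp ((s - c) • A) (f s))
      (NormedSpace.exp ((x - c) • A) (f' + A (f x))) S x := by
  have hexp : HasDerivAt (fun s : ℝ => NormedSpace.exp ((s - c) • A))
      (NormedSpace.exp ((x - c) • A) * A) x :=
    (hasDerivAt_exp_smul_const A (x - c)).comp_sub_const x c
  convert hexp.hasDerivWithinAt.clm_apply_restrictScalars hf using 1
  rw [map_add, mul_apply_eq_comp, add_comm]

theorem integral_exp_smul_sub_apply_deriv_add {f f' : ℝ → H} {a b : ℝ} (hab : a ≤ b)
    (hf : ∀ s ∈ Icc a b, HasDerivWithinAt f (f' s) (Icc a b) s)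
    (hf' : ContinuousOn f' (Icc a b)) :
    ∫ s in a..b, NormedSpace.exp ((s - b) • A) (f' s + A (f s))
      = f b - NormedSpace.exp ((a - b) • A) (f a) := by
  have hfc : ContinuousOn f (Icc a b) := fun s hs => (hf s hs).continuousWithinAt
  have hderiv := fun s hs => (hf s hs).exp_smul_sub_apply A b
  rw [intervalIntegral.integral_eq_sub_of_hasDeriv_right_of_le hab
    (fun s hs => (hderiv s hs).continuousWithinAt)
    (fun s hs => (hderiv s (Ioo_subset_Icc_self hs)).mono_of_mem_nhdsWithin
      (Icc_mem_nhdsGT_of_mem (Ioo_subset_Ico_self hs)))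
    ((hf'.add (A.continuous.comp_continuousOn hfc)).exp_smul_sub_apply A b
      |>.intervalIntegrable_of_Icc hab)]
  simp [NormedSpace.exp_zero]

theorem integral_exp_smul_sub_apply_eq_exp_smul_apply_integral {φ : ℝ → H} {a b : ℝ} (c d : ℝ)
    (hφ : IntervalIntegrable (fun s => NormedSpace.exp ((s - d) • A) (φ s)) volume a b) :
    ∫ s in a..b, NormedSpace.exp ((s - c) • A) (φ s)
      = NormedSpace.exp ((d - c) • A) (∫ s in a..b, NormedSpace.exp ((s - d) • A) (φ s)) := by
  rw [← ContinuousLinearMap.intervalIntegral_comp_comm _ hφ]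
  congr 1 with s
  rw [← mul_apply_eq_comp, ← NormedSpace.exp_add_smul (𝔸 := H →L[ℂ] H), sub_add_sub_cancel']

end ExpSmul

theorem integral_apply_indicator_Ico_add_indicator_Icc {E F 𝓛 : Type*} [AddCommMonoid E]
    [NormedAddCommGroup F] [NormedSpace ℝ F] [FunLike 𝓛 E F] [AddMonoidHomClass 𝓛 E F]
    (L : ℝ → 𝓛) {φ ψ : ℝ → E} {a b c d : ℝ} (hab : a ≤ b) (hbc : b ≤ c) (hcd : c ≤ d)
    (hφ : IntervalIntegrable (fun s => L s (φ s)) volume a b)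
    (hψ : IntervalIntegrable (fun s => L s (ψ s)) volume b c) :
    ∫ s in a..c, L s (indicator (Ico a b) φ s + indicator (Icc b d) ψ s)
      = (∫ s in a..b, L s (φ s)) + ∫ s in b..c, L s (ψ s) := by
  have h₁ : EqOn (fun s => L s (φ s))
      (fun s => L s (indicator (Ico a b) φ s + indicator (Icc b d) ψ s)) (Ioo a b) := by
    intro s hs
    simp [indicator_of_mem (Ioo_subset_Ico_self hs),
      indicator_of_notMem (fun h : s ∈ Icc b d => hs.2.not_ge h.1)]
  have h₂ : EqOn (fun s => L s (ψ s))
      (fun s => L s (indicator (Ico a b) φ s + indicator (Icc b d) ψ s)) (Icc b c) := by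
    intro s hs
    have hs' : s ∈ Icc b d := ⟨hs.1, hs.2.trans hcd⟩
    simp [indicator_of_notMem (fun h : s ∈ Ico a b => h.2.not_ge hs.1), indicator_of_mem hs']
  rw [← intervalIntegral.integral_add_adjacent_intervals
      (hφ.congr_uIoo (uIoo_of_le hab ▸ h₁))
      (hψ.congr (uIoc_of_le hbc ▸ h₂.mono Ioc_subset_Icc_self))]
  congr 1
  exacts [intervalIntegral.integral_congr_Ioo_of_le hab h₁.symm,
    intervalIntegral.integral_congr (uIcc_of_le hbc ▸ h₂.symm)]

/-- With `0 < τ < T`, `η : [-τ,0] → H` C¹, `φ` continuous with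
`∫₀^{T-τ} e^{-(T-τ-s)A} φ(s) ds = η(-τ)`, `ψ(t) = η'(t-T) + A η(t-T)` on `[T-τ,T]`, and
`Γ(t) = ∫₀^t e^{-(t-s)A}(φ(s) 1_{[0,T-τ)}(s) + ψ(s) 1_{[T-τ,T]}(s)) ds`, one has
`Γ(t) = η(t-T)` for `t ∈ [T-τ,T]`; in particular `Γ(T) = η(0)`. -/
theorem stmt7
    {H : Type*} [NormedAddCommGroup H] [InnerProductSpace ℂ H] [CompleteSpace H]
    (A : H →L[ℂ] H) (τ T : ℝ) (hτ : 0 < τ) (hτT : τ < T)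
    (η η' : ℝ → H)
    (hη : ∀ t ∈ Set.Icc (-τ) (0:ℝ), HasDerivWithinAt η (η' t) (Set.Icc (-τ) 0) t)
    (hη' : ContinuousOn η' (Set.Icc (-τ) 0))
    (φ : ℝ → H) (hφ : ContinuousOn φ (Set.Icc 0 (T - τ)))
    (hφint : (∫ s in (0:ℝ)..(T - τ), (NormedSpace.exp ((-(T - τ - s)) • A)) (φ s)) = η (-τ))
    (ψ : ℝ → H) (hψ : ∀ t, ψ t = η' (t - T) + A (η (t - T)))
    (Γ : ℝ → H)
    (hΓ : ∀ t, Γ t = ∫ s in (0:ℝ)..t, (NormedSpace.exp ((-(t - s)) • A))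
        (Set.indicator (Set.Ico (0:ℝ) (T - τ)) φ s
          + Set.indicator (Set.Icc (T - τ) T) ψ s)) :
    (∀ t ∈ Set.Icc (T - τ) T, Γ t = η (t - T)) ∧ Γ T = η 0 := by
  simp only [neg_sub] at hφint hΓ
  have hshift : MapsTo (· - T) (Icc (T - τ) T) (Icc (-τ) 0) :=
    fun s hs => ⟨by linarith [hs.1], by linarith [hs.2]⟩
  have hηT (s) (hs : s ∈ Icc (T - τ) T) :
      HasDerivWithinAt (fun s => η (s - T)) (η' (s - T)) (Icc (T - τ) T) s := by
    simpa [Function.comp_def] using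
      (hη _ (hshift hs)).scomp s ((hasDerivWithinAt_id s _).sub_const T) hshift
  have hη'T : ContinuousOn (fun s => η' (s - T)) (Icc (T - τ) T) :=
    hη'.comp (continuous_sub_right T).continuousOn hshift
  have hψc : ContinuousOn ψ (Icc (T - τ) T) := by
    simp only [funext hψ]
    exact hη'T.add (A.continuous.comp_continuousOn fun s hs => (hηT s hs).continuousWithinAt)
  have main (t) (ht : t ∈ Icc (T - τ) T) : Γ t = η (t - T) := by
    have hφt := (hφ.exp_smul_sub_apply A (T - τ)).intervalIntegrable_of_Icc (μ := volume)
      (by linarith)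
    rw [hΓ, integral_apply_indicator_Ico_add_indicator_Icc _ (by linarith) ht.1 ht.2
      ((hφ.exp_smul_sub_apply A t).intervalIntegrable_of_Icc (by linarith))
      (((hψc.mono (Icc_subset_Icc_right ht.2)).exp_smul_sub_apply A t).intervalIntegrable_of_Icc
        ht.1),
      integral_exp_smul_sub_apply_eq_exp_smul_apply_integral A t (T - τ) hφt, hφint]
    simp only [hψ]
    rw [integral_exp_smul_sub_apply_deriv_add A ht.1
      (fun s hs => (hηT s ⟨hs.1, hs.2.trans ht.2⟩).mono (Icc_subset_Icc_right ht.2))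
      (hη'T.mono (Icc_subset_Icc_right ht.2)), show T - τ - T = -τ by ring]
    abel
  exact ⟨main, by simpa using main T ⟨by linarith, le_rfl⟩⟩
end

section
/- Let H be a normed vector space, τ ≥ 0, a ≥ 0, L ≥ 0, and let g : [0, ∞) → [0, ∞) be locally integrable. Let y : [−τ, ∞) → H be continuous with y(t) = 0 for all t ∈ [−τ, 0], and suppose that for every t ≥ 0, ‖y(t)‖ ≤ a ∫₀^t ‖y(s)‖ ds + L ∫₀^t ( sup_{u ∈ [s−τ, s]} ‖y(u)‖ ) ds + ∫₀^t g(s) ds. Then for every t ≥ 0, sup_{u ∈ [t−τ, t]} ‖y(u)‖ ≤ e^{(L+a)t} ∫₀^t g(s) ds. -/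
/-!
Let `M t` be the supremum of `‖y‖` over `[-τ, t]`. Since `y` vanishes on `[-τ, 0]`, both `‖y s‖`
and the delay-window supremum at `s` are bounded by `M s`, so the hypothesis gives
`M u ≤ (L + a) ∫₀^u M + ∫₀^t g` for `u ≤ t`. The function `M` is monotone, so the slopes of its
primitive are bounded by `M` at the right endpoint, and Grönwall's inequality for the primitive
yields `M t ≤ e^{(L+a)t} ∫₀^t g`.
-/

open MeasureTheory Set Filter Topology

theorem mul_gronwallBound_zero_add (K C x : ℝ) :
    K * gronwallBound 0 K C x + C = C * Real.exp (K * x) := by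
  rcases eq_or_ne K 0 with rfl | hK
  · simp
  · rw [gronwallBound_of_K_ne_0 hK]
    field_simp
    ring

theorem integral_le_gronwallBound_of_monotoneOn {φ : ℝ → ℝ} {K C a b : ℝ}
    (hφ : MonotoneOn φ (Icc a b))
    (h : ∀ u ∈ Icc a b, φ u ≤ K * (∫ s in a..u, φ s) + C) :
    ∀ x ∈ Icc a b, ∫ s in a..x, φ s ≤ gronwallBound 0 K C (x - a) := by
  set F := fun x => ∫ s in a..x, φ s
  have hφint : ∀ x ∈ Icc a b, ∀ z ∈ Icc a b, IntervalIntegrable φ volume x z :=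
    fun x hx z hz => (hφ.mono (uIcc_subset_Icc hx hz)).intervalIntegrable
  have hF : ContinuousOn F (Icc a b) := by
    rcases le_or_gt a b with hab | hba
    · exact (intervalIntegral.continuousOn_primitive_interval'
        (hφint a ⟨le_rfl, hab⟩ b ⟨hab, le_rfl⟩) left_mem_uIcc).mono Icc_subset_uIcc
    · simp [Icc_eq_empty_of_lt hba]
  have hslope : ∀ x ∈ Ico a b, ∀ z ∈ Ioo x b, (z - x)⁻¹ * (F z - F x) ≤ φ z := by
    intro x hx z hz
    have haI : a ∈ Icc a b := left_mem_Icc.2 (hx.1.trans hx.2.le)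
    have hxI : x ∈ Icc a b := Ico_subset_Icc_self hx
    have hzI : z ∈ Icc a b := ⟨hx.1.trans hz.1.le, hz.2.le⟩
    have hFzx : F z - F x = ∫ s in x..z, φ s :=
      intervalIntegral.integral_interval_sub_left (hφint a haI z hzI) (hφint a haI x hxI)
    have hmono : ∫ s in x..z, φ s ≤ ∫ _ in x..z, φ z :=
      intervalIntegral.integral_mono_on hz.1.le (hφint x hxI z hzI) intervalIntegrable_const
        fun s hs => hφ ⟨hx.1.trans hs.1, hs.2.trans hz.2.le⟩ hzI hs.2
    rw [hFzx, inv_mul_le_iff₀ (sub_pos.2 hz.1)]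
    simpa [mul_comm] using hmono
  -- `φ` need not be right-continuous, so the slope bound is taken to be the continuous `K F + C`.
  refine le_gronwallBound_of_liminf_deriv_right_le (f' := fun x => K * F x + C) hF ?_
    (by simp) fun _ _ => le_rfl
  intro x hx r hr
  have hlim : Tendsto (fun z => K * F z + C) (𝓝[>] x) (𝓝 (K * F x + C)) := by
    rw [← nhdsWithin_Ioo_eq_nhdsGT hx.2]
    exact (((hF.const_smul K).add continuousOn_const) x (Ico_subset_Icc_self hx)).tendsto
      |>.mono_left (nhdsWithin_mono _ fun z hz => ⟨hx.1.trans hz.1.le, hz.2.le⟩)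
  refine (((hlim.eventually (gt_mem_nhds hr)).and (Ioo_mem_nhdsGT hx.2)).mono
    fun z ⟨hzr, hz⟩ => ?_).frequently
  exact ((hslope x hx z hz).trans (h z ⟨hx.1.trans hz.1.le, hz.2.le⟩)).trans_lt hzr

theorem le_mul_exp_of_le_mul_integral_add {φ : ℝ → ℝ} {K C a b : ℝ}
    (hφ : MonotoneOn φ (Icc a b)) (hK : 0 ≤ K) (hab : a ≤ b)
    (h : ∀ u ∈ Icc a b, φ u ≤ K * (∫ s in a..u, φ s) + C) :
    φ b ≤ C * Real.exp (K * (b - a)) :=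
  calc φ b ≤ K * (∫ s in a..b, φ s) + C := h b ⟨hab, le_rfl⟩
    _ ≤ K * gronwallBound 0 K C (b - a) + C := by
      gcongr
      exact integral_le_gronwallBound_of_monotoneOn hφ h b ⟨hab, le_rfl⟩
    _ = C * Real.exp (K * (b - a)) := mul_gronwallBound_zero_add K C _

noncomputable def runningSup (f : ℝ → ℝ) (s t : ℝ) : ℝ := sSup (f '' Icc s t)

section runningSup

variable {f : ℝ → ℝ} {s t : ℝ}

theorem le_runningSup (hf : ContinuousOn f (Icc s t)) {u : ℝ} (hu : u ∈ Icc s t) :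
    f u ≤ runningSup f s t :=
  le_csSup (isCompact_Icc.bddAbove_image hf) (mem_image_of_mem f hu)

theorem runningSup_le (hst : s ≤ t) {c : ℝ} (h : ∀ u ∈ Icc s t, f u ≤ c) :
    runningSup f s t ≤ c :=
  csSup_le ((nonempty_Icc.2 hst).image f) (forall_mem_image.2 h)

theorem runningSup_nonneg (hf : ∀ u, 0 ≤ f u) : 0 ≤ runningSup f s t :=
  Real.sSup_nonneg (forall_mem_image.2 fun u _ => hf u)

theorem monotoneOn_runningSup (hf : ContinuousOn f (Ici s)) :
    MonotoneOn (runningSup f s) (Ici s) := fun _ ht _ _ htt' =>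
  csSup_le_csSup (isCompact_Icc.bddAbove_image (hf.mono Icc_subset_Ici_self))
    ((nonempty_Icc.2 ht).image f) (image_mono (Icc_subset_Icc_right htt'))

theorem iSup_Icc_le_runningSup (hf : ContinuousOn f (Icc s t)) {p : ℝ} (hsp : s ≤ p)
    (hpt : p ≤ t) : ⨆ u : Icc p t, f u ≤ runningSup f s t :=
  have : Nonempty (Icc p t) := (nonempty_Icc.2 hpt).to_subtype
  ciSup_le fun u => le_runningSup hf ⟨hsp.trans u.2.1, u.2.2⟩

end runningSup

theorem intervalIntegral.integral_le_of_nonneg_of_le {μ : Measure ℝ} {f φ : ℝ → ℝ} {a b : ℝ}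
    (hab : a ≤ b) (hf : ∀ x ∈ Icc a b, 0 ≤ f x) (hfφ : ∀ x ∈ Icc a b, f x ≤ φ x)
    (hφ : IntervalIntegrable φ μ a b) : ∫ x in a..b, f x ∂μ ≤ ∫ x in a..b, φ x ∂μ := by
  by_cases hfi : IntervalIntegrable f μ a b
  · exact intervalIntegral.integral_mono_on hab hfi hφ hfφ
  · rw [intervalIntegral.integral_undef hfi]
    exact intervalIntegral.integral_nonneg hab fun x hx => (hf x hx).trans (hfφ x hx)

theorem runningSup_norm_le_of_delay_integral_bound {H : Type*} [NormedAddCommGroup H]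
    {τ a L t : ℝ} (hτ : 0 ≤ τ) (ha : 0 ≤ a) (hL : 0 ≤ L) {g : ℝ → ℝ}
    (hg0 : ∀ s, 0 ≤ s → 0 ≤ g s) (hg : IntervalIntegrable g volume 0 t)
    {y : ℝ → H} (hy : ContinuousOn y (Ici (-τ))) (hy0 : ∀ s ∈ Icc (-τ) (0 : ℝ), y s = 0)
    (hbound : ∀ s, 0 ≤ s →
      ‖y s‖ ≤ a * (∫ r in (0 : ℝ)..s, ‖y r‖)
        + L * (∫ r in (0 : ℝ)..s, ⨆ u : Icc (r - τ) r, ‖y (u : ℝ)‖)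
        + ∫ r in (0 : ℝ)..s, g r) :
    ∀ u ∈ Icc 0 t, runningSup (‖y ·‖) (-τ) u ≤
      (L + a) * (∫ s in (0 : ℝ)..u, runningSup (‖y ·‖) (-τ) s) + ∫ s in (0 : ℝ)..t, g s := by
  set M := runningSup (‖y ·‖) (-τ)
  have hyn : ContinuousOn (‖y ·‖) (Ici (-τ)) := hy.norm
  have hM_nonneg : ∀ s, 0 ≤ M s := fun _ => runningSup_nonneg fun _ => norm_nonneg _
  have hM_le : ∀ s, ∀ v ∈ Icc (-τ) s, ‖y v‖ ≤ M s := fun _ _ hv =>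
    le_runningSup (hyn.mono Icc_subset_Ici_self) hv
  intro u hu
  have hM_int : IntervalIntegrable M volume 0 u :=
    ((monotoneOn_runningSup hyn).mono fun s hs => by
      rw [uIcc_of_le hu.1] at hs; exact (neg_nonpos.2 hτ).trans hs.1).intervalIntegrable
  have hg_nonneg : 0 ≤ ∫ s in (0 : ℝ)..t, g s :=
    intervalIntegral.integral_nonneg (hu.1.trans hu.2) fun s hs => hg0 s hs.1
  refine runningSup_le (by linarith [hu.1]) fun v hv => ?_
  rcases le_or_gt v 0 with hv0 | hv0
  · rw [hy0 v ⟨hv.1, hv0⟩, norm_zero]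
    have := intervalIntegral.integral_nonneg (μ := volume) hu.1 fun s _ => hM_nonneg s
    positivity
  have hMvu : ∫ s in (0 : ℝ)..v, M s ≤ ∫ s in (0 : ℝ)..u, M s :=
    intervalIntegral.integral_mono_interval le_rfl hv0.le hv.2
      (Eventually.of_forall hM_nonneg) hM_int
  have hM_int_v : IntervalIntegrable M volume 0 v :=
    hM_int.mono_set (uIcc_subset_uIcc_left (by simp [hu.1, hv0.le, hv.2]))
  have hnorm : ∫ s in (0 : ℝ)..v, ‖y s‖ ≤ ∫ s in (0 : ℝ)..u, M s :=
    (intervalIntegral.integral_le_of_nonneg_of_le hv0.le (fun _ _ => norm_nonneg _)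
      (fun s hs => hM_le s s ⟨by linarith [hs.1], le_rfl⟩) hM_int_v).trans hMvu
  have hdelay : ∫ s in (0 : ℝ)..v, ⨆ w : Icc (s - τ) s, ‖y (w : ℝ)‖ ≤ ∫ s in (0 : ℝ)..u, M s :=
    (intervalIntegral.integral_le_of_nonneg_of_le hv0.le
      (fun _ _ => Real.iSup_nonneg fun _ => norm_nonneg _)
      (fun s hs => iSup_Icc_le_runningSup (hyn.mono Icc_subset_Ici_self)
        (by linarith [hs.1]) (by linarith))
      hM_int_v).trans hMvu
  have hgv : ∫ s in (0 : ℝ)..v, g s ≤ ∫ s in (0 : ℝ)..t, g s :=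
    intervalIntegral.integral_mono_interval le_rfl hv0.le (hv.2.trans hu.2)
      ((ae_restrict_mem measurableSet_Ioc).mono fun s hs => hg0 s hs.1.le) hg
  calc ‖y v‖ ≤ a * (∫ s in (0 : ℝ)..v, ‖y s‖)
        + L * (∫ s in (0 : ℝ)..v, ⨆ w : Icc (s - τ) s, ‖y (w : ℝ)‖) + ∫ s in (0 : ℝ)..v, g s :=
        hbound v hv0.le
    _ ≤ a * (∫ s in (0 : ℝ)..u, M s) + L * (∫ s in (0 : ℝ)..u, M s) + ∫ s in (0 : ℝ)..t, g s := by
        gcongr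
    _ = (L + a) * (∫ s in (0 : ℝ)..u, M s) + ∫ s in (0 : ℝ)..t, g s := by ring

/-- A Gronwall-type lemma with delay: if `y` is continuous on `[-τ,∞)`,
vanishes on `[-τ,0]`, and satisfies
`‖y(t)‖ ≤ a∫₀^t ‖y‖ + L∫₀^t sup_{u∈[s-τ,s]}‖y(u)‖ ds + ∫₀^t g`, then
`sup_{u∈[t-τ,t]} ‖y(u)‖ ≤ e^{(L+a)t} ∫₀^t g` for all `t ≥ 0`. -/
theorem stmt8
    {H : Type*} [NormedAddCommGroup H]
    (τ a L : ℝ) (hτ : 0 ≤ τ) (ha : 0 ≤ a) (hL : 0 ≤ L)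
    (g : ℝ → ℝ) (hg0 : ∀ s, 0 ≤ s → 0 ≤ g s)
    (hgloc : LocallyIntegrableOn g (Set.Ici 0))
    (y : ℝ → H) (hy : ContinuousOn y (Set.Ici (-τ)))
    (hy0 : ∀ t ∈ Set.Icc (-τ) (0:ℝ), y t = 0)
    (hbound : ∀ t, 0 ≤ t →
      ‖y t‖ ≤ a * (∫ s in (0:ℝ)..t, ‖y s‖)
        + L * (∫ s in (0:ℝ)..t, ⨆ u : Set.Icc (s - τ) s, ‖y (u : ℝ)‖)
        + ∫ s in (0:ℝ)..t, g s) :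
    ∀ t, 0 ≤ t →
      (⨆ u : Set.Icc (t - τ) t, ‖y (u : ℝ)‖) ≤
        Real.exp ((L + a) * t) * ∫ s in (0:ℝ)..t, g s := by
  intro t ht
  have hg : IntervalIntegrable g volume 0 t :=
    (intervalIntegrable_iff_integrableOn_Icc_of_le ht).2
      (hgloc.integrableOn_compact_subset Icc_subset_Ici_self isCompact_Icc)
  have hyn : ContinuousOn (‖y ·‖) (Ici (-τ)) := hy.norm
  have hM_mono : MonotoneOn (runningSup (‖y ·‖) (-τ)) (Icc 0 t) :=
    (monotoneOn_runningSup hyn).mono fun s hs => mem_Ici.2 (by linarith [hs.1])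
  calc ⨆ u : Icc (t - τ) t, ‖y (u : ℝ)‖ ≤ runningSup (‖y ·‖) (-τ) t :=
        iSup_Icc_le_runningSup (hyn.mono Icc_subset_Ici_self) (by linarith) (by linarith)
    _ ≤ (∫ s in (0 : ℝ)..t, g s) * Real.exp ((L + a) * (t - 0)) :=
        le_mul_exp_of_le_mul_integral_add hM_mono (by positivity) ht
          (runningSup_norm_le_of_delay_integral_bound hτ ha hL hg0 hg hy hy0 hbound)
    _ = Real.exp ((L + a) * t) * ∫ s in (0 : ℝ)..t, g s := by rw [sub_zero, mul_comm]
end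

section
/- Let H be a normed vector space, 0 < τ < T, let φ : [0, T−τ] → H be Bochner measurable with ∫₀^{T−τ} ‖φ(s)‖² ds < ∞, let η : [−τ, 0] → H be continuous with sup norm ‖η‖_∞, and let Γ : [−τ, T] → H be a Borel measurable function such that Γ(t) = 0 for t ∈ [−τ, 0], ‖Γ(t)‖ ≤ ∫₀^t ‖φ(s)‖ ds for t ∈ [0, T−τ), and Γ(t) = η(t−T) for t ∈ [T−τ, T]; assume the map t ↦ sup_{s ∈ [t−τ, t]} ‖Γ(s)‖ is measurable. Then ∫₀^T ( sup_{s ∈ [t−τ, t]} ‖Γ(s)‖ )² dt ≤ ((T−τ)²/2) ∫₀^{T−τ} ‖φ(s)‖² ds + τ · max{ (T−τ) ∫₀^{T−τ} ‖φ(s)‖² ds , ‖η‖_∞² }. -/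
open MeasureTheory Set
open scoped ENNReal

/-!
On `[0, T - τ)` the delay window `[t - τ, t]` only sees the zero history and the part of `Γ`
dominated by the primitive `F t = ∫₀ᵗ ‖φ‖`, so the sliding supremum is at most `F t`, and
Cauchy–Schwarz gives `F t ² ≤ t ∫₀^{T-τ} ‖φ‖²`; integrating `t` yields the term `(T - τ)² / 2`.
On the last stretch `[T - τ, T]`, of length `τ`, the window may also see `η`, and the sliding
supremum is at most `max (F (T - τ)) ‖η‖_∞`, and the same Cauchy–Schwarz bound for `F (T - τ)`
turns its square into the maximum in the claim.
-/

section CauchySchwarz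

variable {α : Type*} [MeasurableSpace α] {μ : Measure α} {s : Set α} {f : α → ℝ}

theorem MeasureTheory.IntegrableOn.of_sq (hs : μ s ≠ ∞)
    (hf : AEStronglyMeasurable f (μ.restrict s)) (hf2 : IntegrableOn (fun x => f x ^ 2) s μ) :
    IntegrableOn f s μ :=
  have : IsFiniteMeasure (μ.restrict s) := isFiniteMeasure_restrict.2 hs
  ((memLp_two_iff_integrable_sq hf).2 hf2).integrable one_le_two

theorem sq_setIntegral_le_measureReal_mul (hs : μ s ≠ ∞)
    (hf : AEStronglyMeasurable f (μ.restrict s)) (hf2 : IntegrableOn (fun x => f x ^ 2) s μ) :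
    (∫ x in s, f x ∂μ) ^ 2 ≤ μ.real s * ∫ x in s, f x ^ 2 ∂μ := by
  rcases eq_or_ne (μ s) 0 with h0 | h0
  · simp [Measure.restrict_eq_zero.2 h0]
  have hpos : 0 < μ.real s := ENNReal.toReal_pos h0 hs
  have jensen := (Even.convexOn_pow (𝕜 := ℝ) even_two).map_set_average_le
    (continuous_pow 2).continuousOn isClosed_univ h0 hs (by simp) (hf2.of_sq hs hf) hf2
  simp only [setAverage_eq, smul_eq_mul, mul_pow] at jensen
  have := mul_le_mul_of_nonneg_left jensen (sq_nonneg (μ.real s))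
  field_simp at this
  linarith

end CauchySchwarz

theorem sq_intervalIntegral_le_mul_of_le {f : ℝ → ℝ} {a b c : ℝ}
    (hf : AEStronglyMeasurable f (volume.restrict (Ioc a c)))
    (hf2 : IntervalIntegrable (fun x => f x ^ 2) volume a c) (hb : b ∈ Icc a c) :
    (∫ x in a..b, f x) ^ 2 ≤ (b - a) * ∫ x in a..c, f x ^ 2 := by
  have hsub : Ioc a b ⊆ Ioc a c := Ioc_subset_Ioc_right hb.2
  have cauchySchwarz : (∫ x in a..b, f x) ^ 2 ≤ (b - a) * ∫ x in a..b, f x ^ 2 := by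
    simp only [intervalIntegral.integral_of_le hb.1]
    simpa [Real.volume_real_Ioc_of_le hb.1] using
      sq_setIntegral_le_measureReal_mul measure_Ioc_lt_top.ne
        (hf.mono_measure (Measure.restrict_mono hsub le_rfl)) (hf2.1.mono_set hsub)
  refine cauchySchwarz.trans (mul_le_mul_of_nonneg_left ?_ (sub_nonneg.2 hb.1))
  exact intervalIntegral.integral_mono_interval le_rfl hb.1 hb.2
    (.of_forall fun _ => sq_nonneg _) hf2

theorem intervalIntegral_le_of_le_id_mul_of_le_const {g : ℝ → ℝ} {c T A M : ℝ}
    (hgm : AEStronglyMeasurable g volume) (hc : 0 ≤ c) (hcT : c ≤ T)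
    (hg0 : ∀ t ∈ Icc 0 T, 0 ≤ g t) (hleft : ∀ t ∈ Ioo 0 c, g t ≤ t * A)
    (hright : ∀ t ∈ Icc 0 T, g t ≤ M) :
    ∫ t in 0..T, g t ≤ c ^ 2 / 2 * A + (T - c) * M := by
  have hint : IntervalIntegrable g volume 0 T :=
    (intervalIntegrable_iff_integrableOn_Ioc_of_le (hc.trans hcT)).2 <|
      Measure.integrableOn_of_bounded measure_Ioc_lt_top.ne hgm <|
        (ae_restrict_iff' measurableSet_Ioc).2 <| .of_forall fun t ht => by
          rw [Real.norm_of_nonneg (hg0 t (Ioc_subset_Icc_self ht))]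
          exact hright t (Ioc_subset_Icc_self ht)
  have hmid : c ∈ uIcc 0 T := mem_uIcc_of_le hc hcT
  have hint₁ := hint.mono_set (uIcc_subset_uIcc left_mem_uIcc hmid)
  have hint₂ := hint.mono_set (uIcc_subset_uIcc hmid right_mem_uIcc)
  calc ∫ t in 0..T, g t = (∫ t in 0..c, g t) + ∫ t in c..T, g t :=
        (intervalIntegral.integral_add_adjacent_intervals hint₁ hint₂).symm
    _ ≤ (∫ t in 0..c, t * A) + ∫ _ in c..T, M := by
        gcongr
        · exact intervalIntegral.integral_mono_on_of_le_Ioo hc hint₁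
            ((continuous_id.mul continuous_const).intervalIntegrable _ _) hleft
        · exact intervalIntegral.integral_mono_on hcT hint₂ intervalIntegrable_const
            fun t ht => hright t ⟨hc.trans ht.1, ht.2⟩
    _ = c ^ 2 / 2 * A + (T - c) * M := by
        rw [intervalIntegral.integral_mul_const, integral_id, intervalIntegral.integral_const,
          smul_eq_mul]
        ring

theorem ContinuousOn.le_ciSup_of_isCompact {X : Type*} [TopologicalSpace X] {g : X → ℝ}
    {K : Set X} (hg : ContinuousOn g K) (hK : IsCompact K) {x : X} (hx : x ∈ K) : g x ≤ ⨆ s : K, g s :=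
  have : CompactSpace K := isCompact_iff_compactSpace.1 hK
  le_ciSup (isCompact_range hg.domRestrict).bddAbove ⟨x, hx⟩

section SlidingSup

variable {H : Type*} [NormedAddCommGroup H]

noncomputable def slidingSup (τ : ℝ) (Γ : ℝ → H) (t : ℝ) : ℝ := ⨆ s : Icc (t - τ) t, ‖Γ s‖

variable {τ c t M : ℝ} {Γ φ : ℝ → H}

theorem slidingSup_nonneg : 0 ≤ slidingSup τ Γ t :=
  Real.iSup_nonneg fun _ => norm_nonneg _

theorem slidingSup_le (hM : 0 ≤ M) (h : ∀ s ∈ Icc (t - τ) t, ‖Γ s‖ ≤ M) :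
    slidingSup τ Γ t ≤ M :=
  Real.iSup_le (fun s => h s s.2) hM

variable (hφ : IntervalIntegrable (fun s => ‖φ s‖) volume 0 c)
  (hΓ0 : ∀ s ∈ Icc (-τ) 0, Γ s = 0) (hΓ1 : ∀ s ∈ Ico 0 c, ‖Γ s‖ ≤ ∫ u in 0..s, ‖φ u‖)
include hφ hΓ0 hΓ1

theorem norm_le_intervalIntegral_of_le {s u : ℝ} (hs : s ∈ Icc (-τ) u) (hsc : s < c)
    (hu : u ∈ Icc 0 c) : ‖Γ s‖ ≤ ∫ x in 0..u, ‖φ x‖ := by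
  rcases le_or_gt s 0 with hs0 | hs0
  · rw [hΓ0 s ⟨hs.1, hs0⟩, norm_zero]
    exact intervalIntegral.integral_nonneg hu.1 fun _ _ => norm_nonneg _
  · calc ‖Γ s‖ ≤ ∫ x in 0..s, ‖φ x‖ := hΓ1 s ⟨hs0.le, hsc⟩
      _ ≤ ∫ x in 0..u, ‖φ x‖ :=
        intervalIntegral.integral_mono_interval le_rfl hs0.le hs.2
          (.of_forall fun _ => norm_nonneg _)
          (hφ.mono_set <| by
            rw [uIcc_of_le hu.1, uIcc_of_le (hu.1.trans hu.2)]
            exact Icc_subset_Icc_right hu.2)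

theorem slidingSup_le_intervalIntegral (ht : t ∈ Ico 0 c) :
    slidingSup τ Γ t ≤ ∫ x in 0..t, ‖φ x‖ :=
  slidingSup_le (intervalIntegral.integral_nonneg ht.1 fun _ _ => norm_nonneg _)
    fun _ hs => norm_le_intervalIntegral_of_le hφ hΓ0 hΓ1 ⟨by linarith [hs.1, ht.1], hs.2⟩
      (hs.2.trans_lt ht.2) ⟨ht.1, ht.2.le⟩

theorem slidingSup_le_max {T K : ℝ} (hc : 0 ≤ c) (hΓ2 : ∀ s ∈ Icc c T, ‖Γ s‖ ≤ K)
    (ht : t ∈ Icc 0 T) : slidingSup τ Γ t ≤ max (∫ x in 0..c, ‖φ x‖) K := by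
  refine slidingSup_le ?_ fun s hs => ?_
  · exact le_max_of_le_left (intervalIntegral.integral_nonneg hc fun _ _ => norm_nonneg _)
  rcases lt_or_ge s c with hsc | hsc
  · exact le_max_of_le_left (norm_le_intervalIntegral_of_le hφ hΓ0 hΓ1
      ⟨by linarith [hs.1, ht.1], hsc.le⟩ hsc ⟨hc, le_rfl⟩)
  · exact le_max_of_le_right (hΓ2 s ⟨hsc, hs.2.trans ht.2⟩)

variable (hφm : AEStronglyMeasurable (fun s => ‖φ s‖) volume)
  (hφ2 : IntervalIntegrable (fun s => ‖φ s‖ ^ 2) volume 0 c)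
include hφm hφ2

theorem sq_slidingSup_le_mul (ht : t ∈ Ioo 0 c) :
    slidingSup τ Γ t ^ 2 ≤ t * ∫ s in 0..c, ‖φ s‖ ^ 2 := by
  have h := slidingSup_le_intervalIntegral hφ hΓ0 hΓ1 ⟨ht.1.le, ht.2⟩
  simpa using (pow_le_pow_left₀ slidingSup_nonneg h 2).trans
    (sq_intervalIntegral_le_mul_of_le hφm.restrict hφ2 ⟨ht.1.le, ht.2.le⟩)

theorem sq_slidingSup_le_max {T K : ℝ} (hc : 0 ≤ c) (hΓ2 : ∀ s ∈ Icc c T, ‖Γ s‖ ≤ K)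
    (ht : t ∈ Icc 0 T) :
    slidingSup τ Γ t ^ 2 ≤ max (c * ∫ s in 0..c, ‖φ s‖ ^ 2) (K ^ 2) := by
  rcases le_max_iff.1 (slidingSup_le_max hφ hΓ0 hΓ1 hc hΓ2 ht) with h | h
  · refine le_max_of_le_left ((pow_le_pow_left₀ slidingSup_nonneg h 2).trans ?_)
    simpa using sq_intervalIntegral_le_mul_of_le hφm.restrict hφ2 ⟨hc, le_rfl⟩
  · exact le_max_of_le_right (pow_le_pow_left₀ slidingSup_nonneg h 2)

end SlidingSup

theorem stmt9_general
    {H : Type*} [NormedAddCommGroup H]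
    (τ T : ℝ) (hτ : 0 < τ) (hτT : τ < T)
    (φ : ℝ → H) (hφm : StronglyMeasurable φ)
    (hφ2 : IntegrableOn (fun s => ‖φ s‖ ^ 2) (Set.Ioc 0 (T - τ)))
    (η : ℝ → H) (hη : ContinuousOn η (Set.Icc (-τ) 0))
    (Γ : ℝ → H)
    (hΓ0 : ∀ t ∈ Set.Icc (-τ) (0:ℝ), Γ t = 0)
    (hΓ1 : ∀ t ∈ Set.Ico (0:ℝ) (T - τ), ‖Γ t‖ ≤ ∫ s in (0:ℝ)..t, ‖φ s‖)
    (hΓ2 : ∀ t ∈ Set.Icc (T - τ) T, Γ t = η (t - T))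
    (hsupm : Measurable fun t : ℝ => ⨆ s : Set.Icc (t - τ) t, ‖Γ (s : ℝ)‖) :
    (∫ t in (0:ℝ)..T, (⨆ s : Set.Icc (t - τ) t, ‖Γ (s : ℝ)‖) ^ 2) ≤
      (T - τ) ^ 2 / 2 * (∫ s in (0:ℝ)..(T - τ), ‖φ s‖ ^ 2)
        + τ * max ((T - τ) * ∫ s in (0:ℝ)..(T - τ), ‖φ s‖ ^ 2)
            ((⨆ s : Set.Icc (-τ) (0:ℝ), ‖η (s : ℝ)‖) ^ 2) := by
  set A := ∫ s in (0:ℝ)..(T - τ), ‖φ s‖ ^ 2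
  set K := ⨆ s : Set.Icc (-τ) (0:ℝ), ‖η (s : ℝ)‖
  have hc : 0 ≤ T - τ := by linarith
  have hφnorm : AEStronglyMeasurable (fun s => ‖φ s‖) volume := hφm.norm.aestronglyMeasurable
  have hφ1 : IntervalIntegrable (fun s => ‖φ s‖) volume 0 (T - τ) :=
    (intervalIntegrable_iff_integrableOn_Ioc_of_le hc).2
      (hφ2.of_sq measure_Ioc_lt_top.ne hφnorm.restrict)
  have hφ2i := (intervalIntegrable_iff_integrableOn_Ioc_of_le hc).2 hφ2
  have hK : ∀ s ∈ Icc (T - τ) T, ‖Γ s‖ ≤ K := fun s hs => by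
    rw [hΓ2 s hs]
    exact hη.norm.le_ciSup_of_isCompact isCompact_Icc ⟨by linarith [hs.1], by linarith [hs.2]⟩
  have hleft : ∀ t ∈ Ioo 0 (T - τ), slidingSup τ Γ t ^ 2 ≤ t * A := fun _ ht =>
    sq_slidingSup_le_mul hφ1 hΓ0 hΓ1 hφnorm hφ2i ht
  have hright : ∀ t ∈ Icc 0 T, slidingSup τ Γ t ^ 2 ≤ max ((T - τ) * A) (K ^ 2) := fun _ ht =>
    sq_slidingSup_le_max hφ1 hΓ0 hΓ1 hφnorm hφ2i hc hK ht
  have key := intervalIntegral_le_of_le_id_mul_of_le_const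
    (hsupm.pow_const 2).aestronglyMeasurable hc (by linarith) (fun _ _ => sq_nonneg _) hleft hright
  rwa [sub_sub_cancel] at key

/-- For `Γ` vanishing on `[-τ,0]`, dominated by `∫₀^t ‖φ‖` on
`[0,T-τ)`, and equal to `η(·-T)` on `[T-τ,T]`, the sliding supremum satisfies
`∫₀^T (sup_{s∈[t-τ,t]}‖Γ(s)‖)² dt ≤ ((T-τ)²/2)∫₀^{T-τ}‖φ‖² + τ max{(T-τ)∫₀^{T-τ}‖φ‖², ‖η‖_∞²}`. -/
theorem stmt9
    {H : Type*} [NormedAddCommGroup H]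
    (τ T : ℝ) (hτ : 0 < τ) (hτT : τ < T)
    (φ : ℝ → H) (hφm : StronglyMeasurable φ)
    (hφ2 : IntegrableOn (fun s => ‖φ s‖ ^ 2) (Set.Ioc 0 (T - τ)))
    (η : ℝ → H) (hη : ContinuousOn η (Set.Icc (-τ) 0))
    (Γ : ℝ → H) (hΓm : StronglyMeasurable Γ)
    (hΓ0 : ∀ t ∈ Set.Icc (-τ) (0:ℝ), Γ t = 0)
    (hΓ1 : ∀ t ∈ Set.Ico (0:ℝ) (T - τ), ‖Γ t‖ ≤ ∫ s in (0:ℝ)..t, ‖φ s‖)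
    (hΓ2 : ∀ t ∈ Set.Icc (T - τ) T, Γ t = η (t - T))
    (hsupm : Measurable fun t : ℝ => ⨆ s : Set.Icc (t - τ) t, ‖Γ (s : ℝ)‖) :
    (∫ t in (0:ℝ)..T, (⨆ s : Set.Icc (t - τ) t, ‖Γ (s : ℝ)‖) ^ 2) ≤
      (T - τ) ^ 2 / 2 * (∫ s in (0:ℝ)..(T - τ), ‖φ s‖ ^ 2)
        + τ * max ((T - τ) * ∫ s in (0:ℝ)..(T - τ), ‖φ s‖ ^ 2)
            ((⨆ s : Set.Icc (-τ) (0:ℝ), ‖η (s : ℝ)‖) ^ 2) :=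
  stmt9_general τ T hτ hτT φ hφm hφ2 η hη Γ hΓ0 hΓ1 hΓ2 hsupm
end
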